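/- Let E be a finite-dimensional real inner product space, λ > 0, and v ∈ E. Define x* = (max(‖v‖ − 1/λ, 0)/‖v‖)·v if v ≠ 0 and x* = 0 if v = 0. Then x* is the unique minimizer over E of the function x ↦ ‖x‖ + (λ/2)‖x − v‖². -/
import Mathlib

open RealInnerProductSpace

lemma shrink_key {E : Type*} [NormedAddCommGroup E] [DecidableEq E]
    [InnerProductSpace ℝ E]
    (lam : ℝ) (hlam : 0 < lam) (v : E) (xstar : E)
    (hx : xstar = if v = 0 then 0 else (max (‖v‖ - 1 / lam) 0 / ‖v‖) • v) (x : E) :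
    ‖xstar‖ + lam / 2 * ‖xstar - v‖ ^ 2 + lam / 2 * ‖x - xstar‖ ^ 2
      ≤ ‖x‖ + lam / 2 * ‖x - v‖ ^ 2 := by
  by_cases hv : v = 0
  · rw [if_pos hv] at hx
    subst hx; subst hv
    simp only [sub_zero, norm_zero, zero_sub, norm_neg, zero_pow, mul_zero, add_zero,
      zero_add, ne_eq, OfNat.ofNat_ne_zero, not_false_eq_true]
    linarith [norm_nonneg x]
  · rw [if_neg hv] at hx
    have hnv : (0:ℝ) < ‖v‖ := norm_pos_iff.mpr hv
    by_cases ht : ‖v‖ - 1 / lam ≤ 0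
    · rw [max_eq_right ht, zero_div, zero_smul] at hx
      subst hx
      rw [norm_sub_sq_real x v]
      simp only [norm_zero, zero_sub, norm_neg, sub_zero]
      have hcs : ⟪x, v⟫ ≤ ‖x‖ * ‖v‖ := real_inner_le_norm x v
      have h1 : lam * ‖v‖ ≤ 1 := by
        rw [sub_nonpos] at ht
        calc lam * ‖v‖ ≤ lam * (1 / lam) := by nlinarith
        _ = 1 := by field_simp
      nlinarith [norm_nonneg x, norm_nonneg v]
    · push_neg at ht
      have htpos : (0:ℝ) < ‖v‖ - 1 / lam := ht
      rw [max_eq_left htpos.le] at hx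
      set t : ℝ := ‖v‖ - 1 / lam with htdef
      subst hx
      have hvne : ‖v‖ ≠ 0 := ne_of_gt hnv
      have hlne : lam ≠ 0 := ne_of_gt hlam
      have hc : (0:ℝ) ≤ t / ‖v‖ := div_nonneg htpos.le hnv.le
      have hns : ‖(t / ‖v‖) • v‖ = t := by
        rw [norm_smul, Real.norm_of_nonneg hc, div_mul_cancel₀ _ hvne]
      rw [hns]
      have e1 : ‖(t / ‖v‖) • v - v‖ ^ 2 = (t / ‖v‖ - 1) ^ 2 * ‖v‖ ^ 2 := by
        rw [show (t / ‖v‖) • v - v = (t / ‖v‖ - 1) • v by rw [sub_smul, one_smul],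
          norm_smul, mul_pow, Real.norm_eq_abs, sq_abs]
      have e2 : ‖x - (t / ‖v‖) • v‖ ^ 2
          = ‖x‖ ^ 2 - 2 * (t / ‖v‖) * ⟪x, v⟫ + (t / ‖v‖) ^ 2 * ‖v‖ ^ 2 := by
        rw [norm_sub_sq_real, real_inner_smul_right, norm_smul,
          Real.norm_of_nonneg hc, mul_pow]
        ring
      rw [e1, e2, norm_sub_sq_real x v]
      have hcs : ⟪x, v⟫ ≤ ‖x‖ * ‖v‖ := real_inner_le_norm x v
      have hdv2 : (t / ‖v‖) ^ 2 * ‖v‖ ^ 2 = t ^ 2 := by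
        rw [div_pow, div_mul_cancel₀ _ (pow_ne_zero 2 hvne)]
      have hdv3 : (t / ‖v‖ - 1) ^ 2 * ‖v‖ ^ 2 = (1 / lam) ^ 2 := by
        rw [htdef]; field_simp; ring
      rw [hdv2, hdv3]
      have h2 : lam * ⟪x, v⟫ * (1 - t / ‖v‖) = ⟪x, v⟫ / ‖v‖ := by
        rw [htdef]; field_simp; ring
      have h3 : ⟪x, v⟫ / ‖v‖ ≤ ‖x‖ := by
        rw [div_le_iff₀ hnv]; exact hcs
      have hlt : lam / 2 * ‖v‖ ^ 2 = lam / 2 * t ^ 2 + t + lam / 2 * (1 / lam) ^ 2 := by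
        rw [htdef]; field_simp; ring
      nlinarith [h2, h3, hlt]

/-- Isotropic (vector) shrinkage: `x* = (max(‖v‖ − 1/λ, 0)/‖v‖) • v` (with `x* = 0`
when `v = 0`) is the unique minimizer over `E` of `x ↦ ‖x‖ + (λ/2)‖x − v‖²`. -/
theorem vector_shrinkage_minimizer {E : Type*} [NormedAddCommGroup E] [DecidableEq E]
    [InnerProductSpace ℝ E] [FiniteDimensional ℝ E]
    (lam : ℝ) (hlam : 0 < lam) (v : E) (xstar : E)
    (hx : xstar = if v = 0 then 0 else (max (‖v‖ - 1 / lam) 0 / ‖v‖) • v) :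
    (∀ x : E, ‖xstar‖ + lam / 2 * ‖xstar - v‖ ^ 2 ≤ ‖x‖ + lam / 2 * ‖x - v‖ ^ 2) ∧
      (∀ x : E, ‖x‖ + lam / 2 * ‖x - v‖ ^ 2 = ‖xstar‖ + lam / 2 * ‖xstar - v‖ ^ 2 →
        x = xstar) := by
  constructor
  · intro x
    have := shrink_key lam hlam v xstar hx x
    nlinarith [sq_nonneg ‖x - xstar‖]
  · intro x hxeq
    have := shrink_key lam hlam v xstar hx x
    have h0 : ‖x - xstar‖ ^ 2 ≤ 0 := by nlinarith
    have : ‖x - xstar‖ = 0 := by nlinarith [sq_nonneg ‖x - xstar‖, norm_nonneg (x - xstar)]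
    rw [norm_eq_zero, sub_eq_zero] at this
    exact this
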